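/- arXiv:2010.05579 — 2 statements merged into one kernel-verified Lean document; each statement's English description precedes it below -/
import Mathlib

section
/- There exists f ∈ C^∞(T^n, R^n) such that ‖P f‖_∞ > ‖f‖_∞, i.e., the Leray projector is not a contraction with respect to the sup-norm. -/
/-- Euclidean (l²) norm of `k ∈ ℤⁿ`. -/
noncomputable def knorm {n : ℕ} (k : Fin n → ℤ) : ℝ :=
  Real.sqrt (∑ j, ((k j : ℝ)) ^ 2)

/-- Euclidean (l²) norm on `ℂⁿ`. -/
noncomputable def cnorm {n : ℕ} (v : Fin n → ℂ) : ℝ :=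
  Real.sqrt (∑ i, ‖v i‖ ^ 2)

/-- Action of the Leray projector on the `k`-th Fourier coefficient. -/
noncomputable def lerayCoeff {n : ℕ} (k : Fin n → ℤ) (v : Fin n → ℂ) : Fin n → ℂ :=
  if k = 0 then v
  else fun i => v i - ((∑ j, (k j : ℂ) * v j) / ((knorm k : ℂ) ^ 2)) * (k i : ℂ)

/-- The (trigonometric polynomial) function with Fourier coefficients `a`. -/
noncomputable def fourierFn {n : ℕ} (a : (Fin n → ℤ) → Fin n → ℂ) (x : Fin n → ℝ) :
    Fin n → ℂ :=
  fun i => ∑' k : Fin n → ℤ, a k i * Complex.exp (Complex.I * ∑ j, (k j : ℂ) * (x j : ℂ))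

namespace Leray
variable (n : ℕ) (hn : 2 ≤ n)

def e0 : Fin n := ⟨0, by omega⟩
def e1 : Fin n := ⟨1, by omega⟩

lemma e_ne : e0 n hn ≠ e1 n hn := by simp [e0, e1, Fin.ext_iff]

def kk (m₁ m₂ : ℤ) : Fin n → ℤ :=
  fun j => if j = e0 n hn then m₁ else if j = e1 n hn then m₂ else 0

@[simp] lemma kk_e0 (m₁ m₂ : ℤ) : kk n hn m₁ m₂ (e0 n hn) = m₁ := by simp [kk]
@[simp] lemma kk_e1 (m₁ m₂ : ℤ) : kk n hn m₁ m₂ (e1 n hn) = m₂ := by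
  simp [kk, (e_ne n hn).symm]

lemma kk_eq_iff (m₁ m₂ m₁' m₂' : ℤ) :
    kk n hn m₁ m₂ = kk n hn m₁' m₂' ↔ m₁ = m₁' ∧ m₂ = m₂' := by
  constructor
  · intro h
    constructor
    · have := congrFun h (e0 n hn); simpa using this
    · have := congrFun h (e1 n hn); simpa using this
  · rintro ⟨rfl, rfl⟩; rfl

lemma kk_neg (m₁ m₂ : ℤ) : -(kk n hn m₁ m₂) = kk n hn (-m₁) (-m₂) := by
  funext j; simp only [Pi.neg_apply, kk]; split_ifs <;> simp

lemma kk_ne_zero (m₁ m₂ : ℤ) (h : m₁ ≠ 0) : kk n hn m₁ m₂ ≠ 0 := by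
  intro hk
  have := congrFun hk (e0 n hn)
  simp at this
  exact h this

lemma sum_two {M : Type*} [AddCommMonoid M] (g : Fin n → M)
    (h : ∀ j, j ≠ e0 n hn → j ≠ e1 n hn → g j = 0) :
    ∑ j, g j = g (e0 n hn) + g (e1 n hn) := by
  rw [← Finset.sum_pair (e_ne n hn)]
  refine (Finset.sum_subset (Finset.subset_univ _) ?_).symm
  intro j _ hj
  simp only [Finset.mem_insert, Finset.mem_singleton, not_or] at hj
  exact h j hj.1 hj.2

def vv (p q : ℝ) : Fin n → ℂ :=
  fun i => if i = e0 n hn then (p : ℂ) else if i = e1 n hn then (q : ℂ) else 0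

@[simp] lemma vv_e0 (p q : ℝ) : vv n hn p q (e0 n hn) = (p : ℂ) := by simp [vv]
@[simp] lemma vv_e1 (p q : ℝ) : vv n hn p q (e1 n hn) = (q : ℂ) := by
  simp [vv, (e_ne n hn).symm]
lemma vv_other (p q : ℝ) (i : Fin n) (h0 : i ≠ e0 n hn) (h1 : i ≠ e1 n hn) :
    vv n hn p q i = 0 := by simp [vv, h0, h1]

lemma knorm_kk_sq (m₁ m₂ : ℤ) :
    ((knorm (kk n hn m₁ m₂) : ℂ)) ^ 2 = (((m₁ : ℝ)^2 + (m₂ : ℝ)^2 : ℝ) : ℂ) := by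
  have h : knorm (kk n hn m₁ m₂) ^ 2 = ((m₁ : ℝ)^2 + (m₂ : ℝ)^2) := by
    rw [knorm]
    rw [sum_two n hn (fun j => ((kk n hn m₁ m₂ j : ℝ))^2)
      (by intro j h0 h1; simp [kk, h0, h1])]
    rw [Real.sq_sqrt (by positivity)]
    simp
  rw [← h]
  push_cast
  ring

lemma sum_kk_mul (m₁ m₂ : ℤ) (z : Fin n → ℂ)
    (hz : ∀ j, j ≠ e0 n hn → j ≠ e1 n hn → z j = 0) :
    ∑ j, ((kk n hn m₁ m₂ j : ℂ)) * z j = (m₁ : ℂ) * z (e0 n hn) + (m₂ : ℂ) * z (e1 n hn) := by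
  rw [sum_two n hn _ (by intro j h0 h1; rw [hz j h0 h1, mul_zero])]
  simp

lemma leray_kk (m₁ m₂ : ℤ) (hm : m₁ ≠ 0) (p q : ℝ) :
    lerayCoeff (kk n hn m₁ m₂) (vv n hn p q) =
      vv n hn (p - (m₁*p + m₂*q)/((m₁:ℝ)^2+(m₂:ℝ)^2)*m₁)
              (q - (m₁*p + m₂*q)/((m₁:ℝ)^2+(m₂:ℝ)^2)*m₂) := by
  rw [lerayCoeff, if_neg (kk_ne_zero n hn m₁ m₂ hm)]
  funext i
  have hsum : ∑ j, ((kk n hn m₁ m₂ j : ℂ)) * vv n hn p q j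
      = (((m₁:ℝ)*p + (m₂:ℝ)*q : ℝ) : ℂ) := by
    rw [sum_kk_mul n hn m₁ m₂ _ (fun j h0 h1 => vv_other n hn p q j h0 h1)]
    push_cast; simp
  rw [hsum, knorm_kk_sq]
  by_cases h0 : i = e0 n hn
  · subst h0
    simp only [vv_e0, kk_e0]
    rw [← Complex.ofReal_div]
    push_cast
    ring
  · by_cases h1 : i = e1 n hn
    · subst h1
      simp only [vv_e1, kk_e1]
      rw [← Complex.ofReal_div]
      push_cast
      ring
    · rw [vv_other n hn _ _ i h0 h1, vv_other n hn _ _ i h0 h1]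
      simp [kk, h0, h1]

def mk (w₁ w₂ w₃ w₄ : Fin n → ℂ) : (Fin n → ℤ) → Fin n → ℂ := fun k =>
  if k = kk n hn 1 1 then w₁ else if k = kk n hn (-1) (-1) then w₁ else
  if k = kk n hn 1 (-1) then w₂ else if k = kk n hn (-1) 1 then w₂ else
  if k = kk n hn 1 3 then w₃ else if k = kk n hn (-1) (-3) then w₃ else
  if k = kk n hn 1 (-3) then w₄ else if k = kk n hn (-1) 3 then w₄ else 0

def S : Finset (Fin n → ℤ) :=
  {kk n hn 1 1, kk n hn (-1) (-1), kk n hn 1 (-1), kk n hn (-1) 1,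
   kk n hn 1 3, kk n hn (-1) (-3), kk n hn 1 (-3), kk n hn (-1) 3}

lemma mk_of_not_mem (w₁ w₂ w₃ w₄ : Fin n → ℂ) (k : Fin n → ℤ) (hk : k ∉ S n hn) :
    mk n hn w₁ w₂ w₃ w₄ k = 0 := by
  simp only [S, Finset.mem_insert, Finset.mem_singleton, not_or] at hk
  obtain ⟨h1, h2, h3, h4, h5, h6, h7, h8⟩ := hk
  simp only [mk, if_neg h1, if_neg h2, if_neg h3, if_neg h4, if_neg h5, if_neg h6,
    if_neg h7, if_neg h8]

lemma mk_eval (w₁ w₂ w₃ w₄ : Fin n → ℂ) :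
    mk n hn w₁ w₂ w₃ w₄ (kk n hn 1 1) = w₁ ∧
    mk n hn w₁ w₂ w₃ w₄ (kk n hn (-1) (-1)) = w₁ ∧
    mk n hn w₁ w₂ w₃ w₄ (kk n hn 1 (-1)) = w₂ ∧
    mk n hn w₁ w₂ w₃ w₄ (kk n hn (-1) 1) = w₂ ∧
    mk n hn w₁ w₂ w₃ w₄ (kk n hn 1 3) = w₃ ∧
    mk n hn w₁ w₂ w₃ w₄ (kk n hn (-1) (-3)) = w₃ ∧
    mk n hn w₁ w₂ w₃ w₄ (kk n hn 1 (-3)) = w₄ ∧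
    mk n hn w₁ w₂ w₃ w₄ (kk n hn (-1) 3) = w₄ := by
  refine ⟨?_, ?_, ?_, ?_, ?_, ?_, ?_, ?_⟩ <;>
    simp only [mk, kk_eq_iff] <;> norm_num

lemma sum_kk_x (m₁ m₂ : ℤ) (x : Fin n → ℝ) :
    ∑ j, ((kk n hn m₁ m₂ j : ℂ)) * ((x j : ℝ) : ℂ)
      = (m₁ : ℂ) * ((x (e0 n hn) : ℝ) : ℂ) + (m₂ : ℂ) * ((x (e1 n hn) : ℝ) : ℂ) := by
  rw [sum_two n hn _ (by intro j h0 h1; simp [kk, h0, h1])]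
  simp

noncomputable def E (x : Fin n → ℝ) (m₁ m₂ : ℤ) : ℂ :=
  Complex.exp (Complex.I * ((m₁ : ℂ) * ((x (e0 n hn) : ℝ) : ℂ) + (m₂ : ℂ) * ((x (e1 n hn) : ℝ) : ℂ)))

lemma fourier_mk (w₁ w₂ w₃ w₄ : Fin n → ℂ) (x : Fin n → ℝ) (i : Fin n) :
    fourierFn (mk n hn w₁ w₂ w₃ w₄) x i =
      w₁ i * (E n hn x 1 1 + E n hn x (-1) (-1)) +
      w₂ i * (E n hn x 1 (-1) + E n hn x (-1) 1) +
      w₃ i * (E n hn x 1 3 + E n hn x (-1) (-3)) +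
      w₄ i * (E n hn x 1 (-3) + E n hn x (-1) 3) := by
  obtain ⟨h1, h2, h3, h4, h5, h6, h7, h8⟩ := mk_eval n hn w₁ w₂ w₃ w₄
  rw [fourierFn]
  rw [tsum_eq_sum (s := S n hn)
    (by intro k hk; rw [mk_of_not_mem n hn w₁ w₂ w₃ w₄ k hk]; simp)]
  rw [S]
  rw [Finset.sum_insert (by norm_num [Finset.mem_insert, Finset.mem_singleton, kk_eq_iff]),
      Finset.sum_insert (by norm_num [Finset.mem_insert, Finset.mem_singleton, kk_eq_iff]),
      Finset.sum_insert (by norm_num [Finset.mem_insert, Finset.mem_singleton, kk_eq_iff]),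
      Finset.sum_insert (by norm_num [Finset.mem_insert, Finset.mem_singleton, kk_eq_iff]),
      Finset.sum_insert (by norm_num [Finset.mem_insert, Finset.mem_singleton, kk_eq_iff]),
      Finset.sum_insert (by norm_num [Finset.mem_insert, Finset.mem_singleton, kk_eq_iff]),
      Finset.sum_insert (by norm_num [Finset.mem_singleton, kk_eq_iff]),
      Finset.sum_singleton]
  rw [h1, h2, h3, h4, h5, h6, h7, h8]
  rw [sum_kk_x, sum_kk_x, sum_kk_x, sum_kk_x, sum_kk_x, sum_kk_x, sum_kk_x, sum_kk_x]
  simp only [E]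
  push_cast
  ring

noncomputable def C (x : Fin n → ℝ) (m₁ m₂ : ℤ) : ℝ :=
  Real.cos ((m₁ : ℝ) * x (e0 n hn) + (m₂ : ℝ) * x (e1 n hn))

lemma exp_pair (a : ℝ) :
    Complex.exp (Complex.I * (a : ℂ)) + Complex.exp (Complex.I * (-(a : ℂ)))
      = ((2 * Real.cos a : ℝ) : ℂ) := by
  rw [show (Complex.I * (a : ℂ)) = (a : ℂ) * Complex.I by ring,
    show (Complex.I * (-(a : ℂ))) = -(a : ℂ) * Complex.I by ring]
  push_cast [Complex.ofReal_cos]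
  rw [Complex.cos]
  ring

lemma E_pair (x : Fin n → ℝ) (m₁ m₂ : ℤ) :
    E n hn x m₁ m₂ + E n hn x (-m₁) (-m₂) = ((2 * C n hn x m₁ m₂ : ℝ) : ℂ) := by
  simp only [E, C]
  rw [show ((m₁ : ℂ) * ((x (e0 n hn) : ℝ) : ℂ) + (m₂ : ℂ) * ((x (e1 n hn) : ℝ) : ℂ))
      = (((m₁ : ℝ) * x (e0 n hn) + (m₂ : ℝ) * x (e1 n hn) : ℝ) : ℂ) by push_cast; ring,
    show (((-m₁ : ℤ) : ℂ) * ((x (e0 n hn) : ℝ) : ℂ) + ((-m₂ : ℤ) : ℂ) * ((x (e1 n hn) : ℝ) : ℂ))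
      = -(((m₁ : ℝ) * x (e0 n hn) + (m₂ : ℝ) * x (e1 n hn) : ℝ) : ℂ) by push_cast; ring]
  exact exp_pair ((m₁ : ℝ) * x (e0 n hn) + (m₂ : ℝ) * x (e1 n hn))

lemma E_pair' (x : Fin n → ℝ) (m₁ m₂ m₁' m₂' : ℤ) (h₁ : m₁' = -m₁) (h₂ : m₂' = -m₂) :
    E n hn x m₁ m₂ + E n hn x m₁' m₂' = ((2 * C n hn x m₁ m₂ : ℝ) : ℂ) := by
  subst h₁; subst h₂; exact E_pair n hn x m₁ m₂

lemma cnorm_eval (f : Fin n → ℂ) (F₀ F₁ : ℝ)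
    (h0 : f (e0 n hn) = (F₀ : ℂ)) (h1 : f (e1 n hn) = (F₁ : ℂ))
    (h : ∀ i, i ≠ e0 n hn → i ≠ e1 n hn → f i = 0) :
    cnorm f = Real.sqrt (F₀ ^ 2 + F₁ ^ 2) := by
  rw [cnorm, sum_two n hn _ (by intro i hi0 hi1; rw [h i hi0 hi1]; simp)]
  rw [h0, h1]
  simp [Complex.norm_real, sq_abs]

lemma cnorm_fourier_mk_vv (p₁ q₁ p₂ q₂ p₃ q₃ p₄ q₄ : ℝ) (x : Fin n → ℝ) :
    cnorm (fourierFn (mk n hn (vv n hn p₁ q₁) (vv n hn p₂ q₂) (vv n hn p₃ q₃)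
        (vv n hn p₄ q₄)) x)
      = Real.sqrt
        ((2*p₁ * C n hn x 1 1 + 2*p₂ * C n hn x 1 (-1) + 2*p₃ * C n hn x 1 3
            + 2*p₄ * C n hn x 1 (-3)) ^ 2
         + (2*q₁ * C n hn x 1 1 + 2*q₂ * C n hn x 1 (-1) + 2*q₃ * C n hn x 1 3
            + 2*q₄ * C n hn x 1 (-3)) ^ 2) := by
  apply cnorm_eval
  · rw [fourier_mk, E_pair' n hn x 1 1 (-1) (-1) (by ring) (by ring),
      E_pair' n hn x 1 (-1) (-1) 1 (by ring) (by ring),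
      E_pair' n hn x 1 3 (-1) (-3) (by ring) (by ring),
      E_pair' n hn x 1 (-3) (-1) 3 (by ring) (by ring)]
    simp only [vv_e0]
    push_cast
    ring
  · rw [fourier_mk, E_pair' n hn x 1 1 (-1) (-1) (by ring) (by ring),
      E_pair' n hn x 1 (-1) (-1) 1 (by ring) (by ring),
      E_pair' n hn x 1 3 (-1) (-3) (by ring) (by ring),
      E_pair' n hn x 1 (-3) (-1) 3 (by ring) (by ring)]
    simp only [vv_e1]
    push_cast
    ring
  · intro i hi0 hi1
    rw [fourier_mk]
    rw [vv_other n hn _ _ i hi0 hi1, vv_other n hn _ _ i hi0 hi1,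
      vv_other n hn _ _ i hi0 hi1, vv_other n hn _ _ i hi0 hi1]
    ring

lemma vv_congr (p q p' q' : ℝ) (h1 : p = p') (h2 : q = q') :
    vv n hn p q = vv n hn p' q' := by rw [h1, h2]

lemma leray_zero (k : Fin n → ℤ) : lerayCoeff k (0 : Fin n → ℂ) = 0 := by
  rw [lerayCoeff]
  split_ifs
  · rfl
  · funext i; simp

noncomputable def aa : (Fin n → ℤ) → Fin n → ℂ :=
  mk n hn (vv n hn (-29/120) (31/120)) (vv n hn (29/120) (31/120))
    (vv n hn (-1/120) (-3/120)) (vv n hn (1/120) (-3/120))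

lemma leray_aa :
    (fun k => lerayCoeff k (aa n hn k)) =
      mk n hn (vv n hn (-1/4) (1/4)) (vv n hn (1/4) (1/4)) (vv n hn 0 0) (vv n hn 0 0) := by
  funext k
  by_cases hk : k ∈ S n hn
  · simp only [S, Finset.mem_insert, Finset.mem_singleton] at hk
    obtain ⟨a1, a2, a3, a4, a5, a6, a7, a8⟩ :=
      mk_eval n hn (vv n hn (-29/120) (31/120)) (vv n hn (29/120) (31/120))
        (vv n hn (-1/120) (-3/120)) (vv n hn (1/120) (-3/120))
    obtain ⟨b1, b2, b3, b4, b5, b6, b7, b8⟩ :=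
      mk_eval n hn (vv n hn (-1/4) (1/4)) (vv n hn (1/4) (1/4)) (vv n hn 0 0) (vv n hn 0 0)
    rcases hk with rfl | rfl | rfl | rfl | rfl | rfl | rfl | rfl
    · rw [aa, a1, b1, leray_kk n hn 1 1 (by norm_num)]
      exact vv_congr n hn _ _ _ _ (by push_cast; norm_num) (by push_cast; norm_num)
    · rw [aa, a2, b2, leray_kk n hn (-1) (-1) (by norm_num)]
      exact vv_congr n hn _ _ _ _ (by push_cast; norm_num) (by push_cast; norm_num)
    · rw [aa, a3, b3, leray_kk n hn 1 (-1) (by norm_num)]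
      exact vv_congr n hn _ _ _ _ (by push_cast; norm_num) (by push_cast; norm_num)
    · rw [aa, a4, b4, leray_kk n hn (-1) 1 (by norm_num)]
      exact vv_congr n hn _ _ _ _ (by push_cast; norm_num) (by push_cast; norm_num)
    · rw [aa, a5, b5, leray_kk n hn 1 3 (by norm_num)]
      exact vv_congr n hn _ _ _ _ (by push_cast; norm_num) (by push_cast; norm_num)
    · rw [aa, a6, b6, leray_kk n hn (-1) (-3) (by norm_num)]
      exact vv_congr n hn _ _ _ _ (by push_cast; norm_num) (by push_cast; norm_num)
    · rw [aa, a7, b7, leray_kk n hn 1 (-3) (by norm_num)]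
      exact vv_congr n hn _ _ _ _ (by push_cast; norm_num) (by push_cast; norm_num)
    · rw [aa, a8, b8, leray_kk n hn (-1) 3 (by norm_num)]
      exact vv_congr n hn _ _ _ _ (by push_cast; norm_num) (by push_cast; norm_num)
  · rw [aa, mk_of_not_mem n hn _ _ _ _ k hk, mk_of_not_mem n hn _ _ _ _ k hk,
      leray_zero]

lemma conj_vv (p q : ℝ) (i : Fin n) :
    (starRingEnd ℂ) (vv n hn p q i) = vv n hn p q i := by
  rw [vv]
  split_ifs <;> simp

lemma aa_cases (k : Fin n → ℤ) :
    aa n hn k = vv n hn (-29/120) (31/120) ∨ aa n hn k = vv n hn (29/120) (31/120) ∨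
    aa n hn k = vv n hn (-1/120) (-3/120) ∨ aa n hn k = vv n hn (1/120) (-3/120) ∨
    aa n hn k = 0 := by
  rw [aa, mk]
  split_ifs <;> tauto

lemma S_neg_mem (k : Fin n → ℤ) (h : k ∈ S n hn) : -k ∈ S n hn := by
  simp only [S, Finset.mem_insert, Finset.mem_singleton] at h ⊢
  rcases h with rfl | rfl | rfl | rfl | rfl | rfl | rfl | rfl <;> rw [kk_neg] <;> norm_num

lemma S_neg (k : Fin n → ℤ) : -k ∈ S n hn ↔ k ∈ S n hn := by
  constructor
  · intro h
    have := S_neg_mem n hn (-k) h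
    rwa [neg_neg] at this
  · exact S_neg_mem n hn k

lemma aa_neg (k : Fin n → ℤ) : aa n hn (-k) = aa n hn k := by
  obtain ⟨a1, a2, a3, a4, a5, a6, a7, a8⟩ :=
    mk_eval n hn (vv n hn (-29/120) (31/120)) (vv n hn (29/120) (31/120))
      (vv n hn (-1/120) (-3/120)) (vv n hn (1/120) (-3/120))
  by_cases hk : k ∈ S n hn
  · simp only [S, Finset.mem_insert, Finset.mem_singleton] at hk
    rcases hk with rfl | rfl | rfl | rfl | rfl | rfl | rfl | rfl
    · rw [show -(kk n hn 1 1) = kk n hn (-1) (-1) by rw [kk_neg], aa, a1, a2]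
    · rw [show -(kk n hn (-1) (-1)) = kk n hn 1 1 by rw [kk_neg]; norm_num, aa, a1, a2]
    · rw [show -(kk n hn 1 (-1)) = kk n hn (-1) 1 by rw [kk_neg]; norm_num, aa, a3, a4]
    · rw [show -(kk n hn (-1) 1) = kk n hn 1 (-1) by rw [kk_neg]; norm_num, aa, a3, a4]
    · rw [show -(kk n hn 1 3) = kk n hn (-1) (-3) by rw [kk_neg], aa, a5, a6]
    · rw [show -(kk n hn (-1) (-3)) = kk n hn 1 3 by rw [kk_neg]; norm_num, aa, a5, a6]
    · rw [show -(kk n hn 1 (-3)) = kk n hn (-1) 3 by rw [kk_neg]; norm_num, aa, a7, a8]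
    · rw [show -(kk n hn (-1) 3) = kk n hn 1 (-3) by rw [kk_neg]; norm_num, aa, a7, a8]
  · have hk' : -k ∉ S n hn := fun h => hk ((S_neg n hn k).mp h)
    rw [aa, mk_of_not_mem n hn _ _ _ _ _ hk', mk_of_not_mem n hn _ _ _ _ _ hk]

lemma aa_real (k : Fin n → ℤ) (i : Fin n) :
    aa n hn (-k) i = (starRingEnd ℂ) (aa n hn k i) := by
  rw [aa_neg]
  rcases aa_cases n hn k with h | h | h | h | h <;> rw [h]
  · exact (conj_vv n hn _ _ i).symm
  · exact (conj_vv n hn _ _ i).symm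
  · exact (conj_vv n hn _ _ i).symm
  · exact (conj_vv n hn _ _ i).symm
  · simp

lemma aa_support : (Function.support (aa n hn)).Finite := by
  apply Set.Finite.subset (S n hn).finite_toSet
  intro k hk
  by_contra h
  exact hk (mk_of_not_mem n hn _ _ _ _ k h)

lemma key (t u : ℝ) (c1 c2 c3 c4 : ℝ)
    (h1 : c1 = Real.cos (t + u)) (h2 : c2 = Real.cos (t - u))
    (h3 : c3 = Real.cos (t + 3*u)) (h4 : c4 = Real.cos (t - 3*u)) :
    (2*(-29/120 : ℝ)*c1 + 2*(29/120)*c2 + 2*(-1/120)*c3 + 2*(1/120)*c4)^2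
      + (2*(31/120 : ℝ)*c1 + 2*(31/120)*c2 + 2*(-3/120)*c3 + 2*(-3/120)*c4)^2
      ≤ (14/15)^2 := by
  subst h1 h2 h3 h4
  rw [Real.cos_add t u, Real.cos_sub t u, Real.cos_add t (3*u), Real.cos_sub t (3*u),
    Real.cos_three_mul, Real.sin_three_mul]
  have hu : Real.sin u ^ 2 + Real.cos u ^ 2 = 1 := Real.sin_sq_add_cos_sq u
  have ht : Real.sin t ^ 2 + Real.cos t ^ 2 = 1 := Real.sin_sq_add_cos_sq t
  have hs1 : Real.sin u ^ 2 ≤ 1 := by nlinarith [sq_nonneg (Real.cos u)]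
  have hc1 : Real.cos u ^ 2 ≤ 1 := by nlinarith [sq_nonneg (Real.sin u)]
  have P1 : (1 - Real.sin u ^ 2) *
      ((Real.sin u ^ 2) ^ 2 - 15 * Real.sin u ^ 2 + 49) ≥ 0 := by
    apply mul_nonneg
    · linarith
    · nlinarith [sq_nonneg (Real.sin u ^ 2)]
  have P2 : (1 - Real.cos u ^ 2) *
      (9 * (Real.cos u ^ 2) ^ 2 - 51 * Real.cos u ^ 2 + 49) ≥ 0 := by
    apply mul_nonneg
    · linarith
    · nlinarith [sq_nonneg (Real.cos u ^ 2)]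
  nlinarith [mul_nonneg (sq_nonneg (Real.sin t)) P1, mul_nonneg (sq_nonneg (Real.cos t)) P2,
    ht, hu]

end Leray

/-- in dimension `n ≥ 2` there is a real-valued smooth function
`f` on the torus (here a trigonometric polynomial, i.e. with finitely many
nonzero Fourier coefficients, real-valued since `a_{-k} = conj a_k`) such that
the Leray projector increases the sup-norm: `‖P f‖_∞ > ‖f‖_∞`. -/
theorem leray_not_sup_norm_contraction (n : ℕ) (hn : 2 ≤ n) :
    ∃ a : (Fin n → ℤ) → Fin n → ℂ,
      (Function.support a).Finite ∧
      (∀ k i, a (-k) i = starRingEnd ℂ (a k i)) ∧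
      ∃ (x₀ : Fin n → ℝ) (c : ℝ),
        (∀ x : Fin n → ℝ, cnorm (fourierFn a x) ≤ c) ∧
        c < cnorm (fourierFn (fun k => lerayCoeff k (a k)) x₀) := by
  refine ⟨Leray.aa n hn, Leray.aa_support n hn, Leray.aa_real n hn,
    (fun _ => 0), 14/15, ?_, ?_⟩
  · intro x
    rw [Leray.aa, Leray.cnorm_fourier_mk_vv]
    have hA := Leray.key (x (Leray.e0 n hn)) (x (Leray.e1 n hn))
      (Leray.C n hn x 1 1) (Leray.C n hn x 1 (-1)) (Leray.C n hn x 1 3) (Leray.C n hn x 1 (-3))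
      (by rw [Leray.C]; push_cast; ring_nf)
      (by rw [Leray.C]; push_cast; ring_nf)
      (by rw [Leray.C]; push_cast; ring_nf)
      (by rw [Leray.C]; push_cast; ring_nf)
    calc Real.sqrt _ ≤ Real.sqrt ((14/15 : ℝ)^2) := Real.sqrt_le_sqrt hA
      _ = 14/15 := Real.sqrt_sq (by norm_num)
  · rw [Leray.leray_aa, Leray.cnorm_fourier_mk_vv]
    have hC : ∀ m₁ m₂ : ℤ, Leray.C n hn (fun _ => 0) m₁ m₂ = 1 := by
      intro m₁ m₂; rw [Leray.C]; norm_num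
    rw [hC, hC, hC, hC]
    norm_num
end

section
/- Recursion bound with viscosity: define a_k : [0,∞) → C for k ≥ 1 by a_1(t) = e^{−νt} and a_k(t) = i(k−1) ∫₀^t a_{k−1}(s) e^{ν k² s} ds · e^{−ν k² t} for k ≥ 2, where ν > 0. Then for all k ≥ 1 and t ≥ 0, |a_k(t)| ≤ 2 e^{−νt} / (ν^{k−1} (k+1)!). In particular Σ_{k≥1} k^l |a_k(t)| < ∞ for every l ∈ N₀ and all t ≥ 0. -/
private lemma exp_int_eval (c t : ℝ) (hc : c ≠ 0) :
    ∫ s in (0:ℝ)..t, Real.exp (c * s) = (Real.exp (c*t) - 1)/c := by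
  rw [intervalIntegral.integral_comp_mul_left (fun x => Real.exp x) hc]
  simp [integral_exp, Real.exp_zero, smul_eq_mul]
  ring

/-- recursion bound with viscosity. For `ν > 0` let
`a_1(t) = e^{−νt}` and `a_k(t) = i(k−1)∫₀ᵗ a_{k−1}(s)e^{νk²s} ds · e^{−νk²t}`
for `k ≥ 2`. Then `|a_k(t)| ≤ 2e^{−νt}/(ν^{k−1}(k+1)!)` for all `k ≥ 1`,
`t ≥ 0`; in particular `Σ_{k≥1} k^l |a_k(t)| < ∞` for every `l ∈ ℕ₀`. -/
theorem viscous_recursion_bound (ν : ℝ) (hν : 0 < ν) (a : ℕ → ℝ → ℂ)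
    (h1 : ∀ t : ℝ, a 1 t = (Real.exp (-(ν * t)) : ℂ))
    (hrec : ∀ k : ℕ, 2 ≤ k → ∀ t : ℝ, 0 ≤ t →
      a k t = Complex.I * ((k : ℂ) - 1) *
        (∫ s in (0 : ℝ)..t, a (k - 1) s * (Real.exp (ν * (k : ℝ) ^ 2 * s) : ℂ)) *
        (Real.exp (-(ν * (k : ℝ) ^ 2 * t)) : ℂ)) :
    (∀ k : ℕ, 1 ≤ k → ∀ t : ℝ, 0 ≤ t →
      ‖a k t‖ ≤
        2 * Real.exp (-(ν * t)) / (ν ^ (k - 1) * (Nat.factorial (k + 1) : ℝ))) ∧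
    (∀ (l : ℕ) (t : ℝ), 0 ≤ t →
      Summable (fun k : ℕ => ((k + 1 : ℕ) : ℝ) ^ l * ‖a (k + 1) t‖)) := by
  have key : ∀ k : ℕ, 1 ≤ k → ∀ t : ℝ, 0 ≤ t →
      ‖a k t‖ ≤
        2 * Real.exp (-(ν * t)) / (ν ^ (k - 1) * (Nat.factorial (k + 1) : ℝ)) := by
    intro k hk
    induction k, hk using Nat.le_induction with
    | base =>
      intro t ht
      rw [h1 t, Complex.norm_real, Real.norm_eq_abs, abs_of_nonneg (Real.exp_nonneg _)]
      norm_num [Nat.factorial]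
    | succ k hk ih =>
      intro t ht
      set K : ℕ := k + 1 with hK
      have hK2 : 2 ≤ K := by omega
      have hrecK := hrec K hK2 t ht
      have hsub : K - 1 = k := by omega
      rw [hsub] at hrecK
      have hkpos : (0:ℝ) < k := by exact_mod_cast hk
      set C : ℝ := 2 / (ν ^ (k - 1) * (Nat.factorial (k + 1) : ℝ)) with hC
      have hCpos : 0 < C := by
        apply div_pos (by norm_num); positivity
      set c : ℝ := ν * (K : ℝ) ^ 2 - ν with hc
      have hKR : (K : ℝ) = (k : ℝ) + 1 := by push_cast [hK]; ring
      have hcpos : 0 < c := by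
        have : (1:ℝ) < (K:ℝ)^2 := by nlinarith [hkpos]
        rw [hc]; nlinarith
      -- bound the integral
      have hbound : ‖∫ s in (0:ℝ)..t, a k s * (Real.exp (ν * (K : ℝ) ^ 2 * s) : ℂ)‖ ≤
          |∫ s in (0:ℝ)..t, C * Real.exp (c * s)| := by
        apply intervalIntegral.norm_integral_le_abs_of_norm_le
        · rw [Set.uIoc_of_le ht]
          refine (MeasureTheory.ae_restrict_iff' measurableSet_Ioc).2 ?_
          filter_upwards with s hs
          have hs0 : 0 ≤ s := le_of_lt hs.1
          have hih := ih s hs0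
          rw [norm_mul]
          have h2 : ‖(Real.exp (ν * (K : ℝ) ^ 2 * s) : ℂ)‖ = Real.exp (ν * (K : ℝ) ^ 2 * s) := by
            rw [Complex.norm_real, Real.norm_eq_abs, abs_of_nonneg (Real.exp_nonneg _)]
          rw [h2]
          calc ‖a k s‖ * Real.exp (ν * (K : ℝ) ^ 2 * s)
              ≤ (2 * Real.exp (-(ν * s)) / (ν ^ (k - 1) * (Nat.factorial (k + 1) : ℝ)))
                * Real.exp (ν * (K : ℝ) ^ 2 * s) := by
                exact mul_le_mul_of_nonneg_right hih (Real.exp_nonneg _)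
            _ = C * Real.exp (c * s) := by
                rw [hC, hc, div_mul_eq_mul_div, mul_assoc, ← Real.exp_add]
                ring_nf
        · exact (continuous_const.mul (Real.continuous_exp.comp
            (continuous_const.mul continuous_id))).intervalIntegrable 0 t
      have hone : (1:ℝ) ≤ Real.exp (c * t) := by
        rw [← Real.exp_zero]; exact Real.exp_le_exp.2 (mul_nonneg hcpos.le ht)
      have hint : ∫ s in (0:ℝ)..t, C * Real.exp (c * s) = C * ((Real.exp (c*t) - 1)/c) := by
        rw [intervalIntegral.integral_const_mul, exp_int_eval c t (ne_of_gt hcpos)]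
      have hintle : |∫ s in (0:ℝ)..t, C * Real.exp (c * s)| ≤ C * Real.exp (c*t) / c := by
        rw [hint, abs_of_nonneg (mul_nonneg hCpos.le (div_nonneg (by linarith) hcpos.le)),
          mul_div_assoc]
        gcongr
        linarith
      have hee : Real.exp (c*t) * Real.exp (-(ν * (K:ℝ)^2 * t)) = Real.exp (-(ν*t)) := by
        rw [← Real.exp_add]; congr 1; rw [hc]; ring
      have hck : c = ν * (k:ℝ) * ((k:ℝ) + 2) := by rw [hc, hKR]; ring
      have hfac : (Nat.factorial (k + 1 + 1) : ℝ) = ((k:ℝ) + 2) * (Nat.factorial (k + 1) : ℝ) := by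
        rw [Nat.factorial_succ]; push_cast; ring
      have hpow : ν ^ (k + 1 - 1) = ν ^ (k - 1) * ν := by
        have h' : k + 1 - 1 = (k - 1) + 1 := by omega
        rw [h', pow_succ]
      rw [hrecK, norm_mul, norm_mul, norm_mul]
      have habsk : ‖(K : ℂ) - 1‖ = (k : ℝ) := by
        have h' : (K : ℂ) - 1 = ((k : ℝ) : ℂ) := by push_cast [hK]; ring
        rw [h', Complex.norm_real, Real.norm_eq_abs, abs_of_nonneg (le_of_lt hkpos)]
      have habse : ‖((Real.exp (-(ν * (K : ℝ) ^ 2 * t)) : ℂ))‖ =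
          Real.exp (-(ν * (K : ℝ) ^ 2 * t)) := by
        rw [Complex.norm_real, Real.norm_eq_abs, abs_of_nonneg (Real.exp_nonneg _)]
      rw [Complex.norm_I, habsk, habse, one_mul]
      have hbound' : ‖∫ s in (0:ℝ)..t, a k s * (Real.exp (ν * (K : ℝ) ^ 2 * s) : ℂ)‖
          ≤ C * Real.exp (c*t) / c := le_trans hbound hintle
      calc (k : ℝ) * ‖∫ s in (0:ℝ)..t, a k s * (Real.exp (ν * (K : ℝ) ^ 2 * s) : ℂ)‖
            * Real.exp (-(ν * (K : ℝ) ^ 2 * t))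
          ≤ (k : ℝ) * (C * Real.exp (c*t) / c) * Real.exp (-(ν * (K : ℝ) ^ 2 * t)) := by
            apply mul_le_mul_of_nonneg_right _ (Real.exp_nonneg _)
            exact mul_le_mul_of_nonneg_left hbound' (le_of_lt hkpos)
        _ = (k : ℝ) / c * C * (Real.exp (c*t) * Real.exp (-(ν * (K:ℝ)^2 * t))) := by ring
        _ = (k : ℝ) / c * C * Real.exp (-(ν*t)) := by rw [hee]
        _ = 2 * Real.exp (-(ν * t)) / (ν ^ (k + 1 - 1) * (Nat.factorial (k + 1 + 1) : ℝ)) := by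
            rw [hC, hck, hpow, hfac]
            have hν' : ν ≠ 0 := ne_of_gt hν
            have hk0 : (k:ℝ) ≠ 0 := ne_of_gt hkpos
            have hk2 : (k:ℝ) + 2 ≠ 0 := by positivity
            have hf : (Nat.factorial (k+1) : ℝ) ≠ 0 := by positivity
            have hp : ν ^ (k-1) ≠ 0 := pow_ne_zero _ hν'
            field_simp
  refine ⟨key, ?_⟩
  intro l t ht
  have hx : Summable (fun k : ℕ => 2 * Real.exp (-(ν*t)) * Real.exp (l : ℝ) *
      ((Real.exp (l : ℝ) / ν) ^ k / (Nat.factorial k : ℝ))) :=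
    (Real.summable_pow_div_factorial _).mul_left _
  apply Summable.of_nonneg_of_le _ _ hx
  · intro k; positivity
  · intro k
    have hb := key (k+1) (by omega) t ht
    have hb' : ‖a (k+1) t‖ ≤
        2 * Real.exp (-(ν * t)) / (ν ^ k * (Nat.factorial (k + 2) : ℝ)) := by
      simpa using hb
    have h1' : ((k + 1 : ℕ) : ℝ) ^ l * ‖a (k + 1) t‖ ≤
        ((k + 1 : ℕ) : ℝ) ^ l * (2 * Real.exp (-(ν * t)) / (ν ^ k * (Nat.factorial (k + 2) : ℝ))) :=
      mul_le_mul_of_nonneg_left hb' (by positivity)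
    refine h1'.trans ?_
    have hkl : ((k + 1 : ℕ) : ℝ) ^ l ≤ Real.exp (l:ℝ) * Real.exp (l:ℝ) ^ k := by
      have h2 : ((k + 1 : ℕ) : ℝ) ≤ Real.exp ((k:ℝ) + 1) := by
        push_cast
        calc (k:ℝ) + 1 ≤ Real.exp (k:ℝ) := Real.add_one_le_exp _
          _ ≤ Real.exp ((k:ℝ)+1) := Real.exp_le_exp.2 (by linarith)
      calc ((k + 1 : ℕ) : ℝ) ^ l ≤ (Real.exp ((k:ℝ)+1)) ^ l := by
            apply pow_le_pow_left₀ (by positivity) h2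
        _ = Real.exp (l:ℝ) * Real.exp (l:ℝ) ^ k := by
            rw [← Real.exp_nat_mul, ← Real.exp_nat_mul, ← Real.exp_add]
            congr 1; ring
    have hfacle : (Nat.factorial k : ℝ) ≤ (Nat.factorial (k+2) : ℝ) := by
      exact_mod_cast Nat.factorial_le (by omega)
    calc ((k + 1 : ℕ) : ℝ) ^ l * (2 * Real.exp (-(ν * t)) / (ν ^ k * (Nat.factorial (k + 2) : ℝ)))
        ≤ (Real.exp (l:ℝ) * Real.exp (l:ℝ) ^ k) *
          (2 * Real.exp (-(ν * t)) / (ν ^ k * (Nat.factorial k : ℝ))) := by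
          apply mul_le_mul hkl _ (by positivity) (by positivity)
          apply div_le_div_of_nonneg_left (by positivity) (by positivity)
          exact mul_le_mul_of_nonneg_left hfacle (by positivity)
      _ = 2 * Real.exp (-(ν*t)) * Real.exp (l : ℝ) *
          ((Real.exp (l : ℝ) / ν) ^ k / (Nat.factorial k : ℝ)) := by
          rw [div_pow]
          field_simp
end
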